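/- Let p ∈ (1, ∞) and, for a ≥ 0, define φ_a : [0, ∞) → [0, ∞) by φ_a(t) = ∫_0^t (a + s)^{p−2} s ds, so that φ_a'(t) = (a + t)^{p−2} t. For every real δ > 0 there exists a constant c(δ) > 0, depending only on p and δ, such that for every integer n ≥ 1 and all x, y, z ∈ ℝ^n: φ_{|x|}'(|x − z|) · |x − y| ≤ δ φ_{|x|}(|x − y|) + c(δ) φ_{|x|}(|x − z|). -/

import Mathlib

/-!
Write `φ'_a(t) = (a + t)^{p-2} t`. Since `θ (a + t) ≤ a + θ t ≤ a + t` for `θ ∈ [0, 1]`, the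
derivative scales like `θ^{min(1,p-1)} φ'_a(t) ≥ φ'_a(θ t) ≥ θ^{max(1,p-1)} φ'_a(t)`. Integrating
the lower bound gives `φ'_a(t) t ≤ K φ_a(t)` with `K = max(1,p-1) + 1`. Then for `u ≤ t / ε` the
left side is at most `(K / ε) φ_a(t)`, while for `t < ε u` the upper bound gives
`φ'_a(t) ≤ ε^{min(1,p-1)} φ'_a(u)`, which is at most `(δ / K) φ'_a(u)` for `ε` small in terms of
`p` and `δ`, so the left side is at most `δ φ_a(u)`.
-/

/-- The shifted N-function `φ_a(t) = ∫₀ᵗ (a + s)^{p-2} s ds`. -/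
noncomputable def phiShift (p a t : ℝ) : ℝ :=
  ∫ s in (0:ℝ)..t, (a + s) ^ (p - 2) * s

open MeasureTheory Real Set

noncomputable def phiShiftDeriv (p a t : ℝ) : ℝ := (a + t) ^ (p - 2) * t

section

variable {p a : ℝ}

@[simp]
lemma phiShiftDeriv_zero : phiShiftDeriv p a 0 = 0 :=
  mul_zero _

lemma phiShiftDeriv_nonneg (ha : 0 ≤ a) {t : ℝ} (ht : 0 ≤ t) : 0 ≤ phiShiftDeriv p a t :=
  mul_nonneg (rpow_nonneg (by linarith) _) ht

lemma phiShift_nonneg (ha : 0 ≤ a) {t : ℝ} (ht : 0 ≤ t) : 0 ≤ phiShift p a t :=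
  intervalIntegral.integral_nonneg ht fun _ hs => phiShiftDeriv_nonneg ha hs.1

lemma continuousOn_phiShiftDeriv (hp : 1 < p) (ha : 0 ≤ a) :
    ContinuousOn (phiShiftDeriv p a) (Ici 0) := by
  rcases ha.eq_or_lt with rfl | ha
  · refine (continuousOn_id.rpow_const fun _ _ => Or.inr (by linarith : 0 ≤ p - 1)).congr
      fun t ht => ?_
    change phiShiftDeriv p 0 t = t ^ (p - 1)
    rcases (mem_Ici.1 ht).eq_or_lt with rfl | ht
    · rw [phiShiftDeriv_zero, zero_rpow (by linarith)]
    · rw [phiShiftDeriv, zero_add, ← rpow_add_one ht.ne']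
      ring_nf
  · exact (ContinuousOn.rpow_const (f := fun t => a + t) (by fun_prop)
      fun t ht => Or.inl (by linarith [mem_Ici.1 ht])).mul continuousOn_id

lemma rpow_sub_one_mul_phiShiftDeriv {θ t : ℝ} (hθ : 0 < θ) (hat : 0 ≤ a + t) :
    θ ^ (p - 1) * phiShiftDeriv p a t = (θ * (a + t)) ^ (p - 2) * (θ * t) := by
  rw [phiShiftDeriv, mul_rpow hθ.le hat, show p - 1 = p - 2 + 1 by ring, rpow_add_one hθ.ne']
  ring

variable {θ t : ℝ}

lemma phiShiftDeriv_mul_le (ha : 0 ≤ a) (hθ0 : 0 ≤ θ) (hθ1 : θ ≤ 1) (ht : 0 ≤ t) :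
    phiShiftDeriv p a (θ * t) ≤ θ ^ min 1 (p - 1) * phiShiftDeriv p a t := by
  have hθt : θ * t ≤ t := mul_le_of_le_one_left ht hθ1
  rcases le_total 2 p with hp | hp
  · rw [min_eq_left (by linarith), rpow_one]
    calc phiShiftDeriv p a (θ * t) = (a + θ * t) ^ (p - 2) * (θ * t) := rfl
      _ ≤ (a + t) ^ (p - 2) * (θ * t) := by gcongr
      _ = θ * phiShiftDeriv p a t := by rw [phiShiftDeriv]; ring
  rw [min_eq_right (by linarith)]
  rcases hθ0.eq_or_lt with rfl | hθ
  · rw [zero_mul, phiShiftDeriv_zero]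
    exact mul_nonneg (rpow_nonneg le_rfl _) (phiShiftDeriv_nonneg ha ht)
  rcases ht.eq_or_lt with rfl | ht
  · simp
  calc phiShiftDeriv p a (θ * t) = (a + θ * t) ^ (p - 2) * (θ * t) := rfl
    _ ≤ (θ * (a + t)) ^ (p - 2) * (θ * t) :=
      mul_le_mul_of_nonneg_right
        (rpow_le_rpow_of_nonpos (by positivity) (by nlinarith) (by linarith)) (by positivity)
    _ = θ ^ (p - 1) * phiShiftDeriv p a t :=
      (rpow_sub_one_mul_phiShiftDeriv hθ (by linarith)).symm

lemma le_phiShiftDeriv_mul (ha : 0 ≤ a) (hθ0 : 0 ≤ θ) (hθ1 : θ ≤ 1) (ht : 0 ≤ t) :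
    θ ^ max 1 (p - 1) * phiShiftDeriv p a t ≤ phiShiftDeriv p a (θ * t) := by
  rcases hθ0.eq_or_lt with rfl | hθ
  · rw [zero_rpow (by linarith [le_max_left 1 (p - 1)]), zero_mul, zero_mul, phiShiftDeriv_zero]
  rcases ht.eq_or_lt with rfl | ht
  · simp
  rcases le_total p 2 with hp | hp
  · rw [max_eq_left (by linarith), rpow_one]
    calc θ * phiShiftDeriv p a t = (a + t) ^ (p - 2) * (θ * t) := by rw [phiShiftDeriv]; ring
      _ ≤ (a + θ * t) ^ (p - 2) * (θ * t) :=
        mul_le_mul_of_nonneg_right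
          (rpow_le_rpow_of_nonpos (by positivity) (by nlinarith) (by linarith)) (by positivity)
  rw [max_eq_right (by linarith), rpow_sub_one_mul_phiShiftDeriv hθ (by linarith)]
  calc (θ * (a + t)) ^ (p - 2) * (θ * t) ≤ (a + θ * t) ^ (p - 2) * (θ * t) := by
        gcongr
        nlinarith
    _ = phiShiftDeriv p a (θ * t) := rfl

lemma phiShiftDeriv_mul_self_le (hp : 1 < p) (ha : 0 ≤ a) (ht : 0 ≤ t) :
    phiShiftDeriv p a t * t ≤ (max 1 (p - 1) + 1) * phiShift p a t := by
  rcases ht.eq_or_lt with rfl | ht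
  · simp [phiShift]
  set m := max 1 (p - 1)
  have hm : 1 ≤ m := le_max_left _ _
  have hlower : ∀ s ∈ Icc 0 t, (s / t) ^ m * phiShiftDeriv p a t ≤ phiShiftDeriv p a s :=
    fun s hs => by
      simpa [div_mul_cancel₀ s ht.ne'] using le_phiShiftDeriv_mul ha (div_nonneg hs.1 ht.le)
        ((div_le_one ht).2 hs.2) ht.le
  have hintegral : ∫ s in (0 : ℝ)..t, (s / t) ^ m * phiShiftDeriv p a t
      = t / (m + 1) * phiShiftDeriv p a t := by
    rw [intervalIntegral.integral_mul_const, intervalIntegral.integral_comp_div (· ^ m) ht.ne',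
      integral_rpow (Or.inl (by linarith)), zero_div, div_self ht.ne', one_rpow,
      zero_rpow (by linarith), smul_eq_mul]
    ring
  have hcont : Continuous fun s => (s / t) ^ m * phiShiftDeriv p a t :=
    ((continuous_id.div_const t).rpow_const fun _ => Or.inr (by linarith)).mul continuous_const
  have hmono := intervalIntegral.integral_mono_on ht.le
    (hcont.intervalIntegrable (μ := volume) 0 t)
    ((continuousOn_phiShiftDeriv hp ha).mono
      (uIcc_of_le ht.le ▸ Icc_subset_Ici_self : uIcc 0 t ⊆ Ici 0)).intervalIntegrable
    hlower
  rw [hintegral] at hmono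
  have hm1 : 0 < m + 1 := by linarith
  calc phiShiftDeriv p a t * t = (m + 1) * (t / (m + 1) * phiShiftDeriv p a t) := by
        field_simp
    _ ≤ (m + 1) * phiShift p a t := by gcongr; exact hmono

lemma phiShiftDeriv_mul_le_add (hp : 1 < p) {δ : ℝ} (hδ : 0 < δ) :
    ∃ c > 0, ∀ a t u : ℝ, 0 ≤ a → 0 ≤ t → 0 ≤ u →
      phiShiftDeriv p a t * u ≤ δ * phiShift p a u + c * phiShift p a t := by
  set K := max 1 (p - 1) + 1
  set r := min 1 (p - 1)
  have hK : 0 < K := by positivity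
  have hr : 0 < r := lt_min one_pos (by linarith)
  set ε := min 1 ((δ / K) ^ r⁻¹)
  have hε : 0 < ε := lt_min one_pos (by positivity)
  have hεr : ε ^ r ≤ δ / K :=
    (rpow_le_rpow hε.le (min_le_right _ _) hr.le).trans (rpow_inv_rpow (by positivity) hr.ne').le
  refine ⟨K / ε, by positivity, fun a t u ha ht hu => ?_⟩
  have hδu := mul_nonneg hδ.le (phiShift_nonneg (p := p) ha hu)
  rcases le_or_gt (ε * u) t with htu | htu
  · have hcu := div_nonneg (mul_nonneg hK.le (phiShift_nonneg (p := p) ha ht)) hε.le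
    calc phiShiftDeriv p a t * u ≤ phiShiftDeriv p a t * (t / ε) := by
          gcongr
          · exact phiShiftDeriv_nonneg ha ht
          · rwa [le_div_iff₀ hε, mul_comm]
      _ = phiShiftDeriv p a t * t / ε := by ring
      _ ≤ K * phiShift p a t / ε :=
          div_le_div_of_nonneg_right (phiShiftDeriv_mul_self_le hp ha ht) hε.le
      _ ≤ δ * phiShift p a u + K / ε * phiShift p a t := by rw [div_mul_eq_mul_div]; linarith
  · have hu0 : 0 < u := by nlinarith
    have hθ : t / u ≤ ε := (div_le_iff₀ hu0).2 (by linarith)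
    have hderiv : phiShiftDeriv p a t ≤ δ / K * phiShiftDeriv p a u := by
      calc phiShiftDeriv p a t = phiShiftDeriv p a (t / u * u) := by
            rw [div_mul_cancel₀ t hu0.ne']
        _ ≤ (t / u) ^ r * phiShiftDeriv p a u :=
          phiShiftDeriv_mul_le ha (by positivity) (hθ.trans (min_le_left _ _)) hu
        _ ≤ δ / K * phiShiftDeriv p a u := by
          gcongr
          · exact phiShiftDeriv_nonneg ha hu
          · exact (rpow_le_rpow (by positivity) hθ hr.le).trans hεr
    have hcu := mul_nonneg (div_nonneg hK.le hε.le) (phiShift_nonneg (p := p) ha ht)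
    calc phiShiftDeriv p a t * u ≤ δ / K * (phiShiftDeriv p a u * u) := by
          rw [← mul_assoc]; gcongr
      _ ≤ δ / K * (K * phiShift p a u) :=
          mul_le_mul_of_nonneg_left (phiShiftDeriv_mul_self_le hp ha hu) (by positivity)
      _ = δ * phiShift p a u := by field_simp
      _ ≤ δ * phiShift p a u + K / ε * phiShift p a t := by linarith

end

/-- `φ_{|x|}'(|x-z|) |x-y| ≤ δ φ_{|x|}(|x-y|) + c(δ) φ_{|x|}(|x-z|)`,
where `φ_a'(t) = (a + t)^{p-2} t`. -/
theorem shifted_N_function_key_bound (p : ℝ) (hp1 : 1 < p) (δ : ℝ) (hδ : 0 < δ) :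
    ∃ c : ℝ, 0 < c ∧
      ∀ n : ℕ, 1 ≤ n →
        ∀ x y z : EuclideanSpace ℝ (Fin n),
          (‖x‖ + ‖x - z‖) ^ (p - 2) * ‖x - z‖ * ‖x - y‖ ≤
            δ * phiShift p ‖x‖ ‖x - y‖ + c * phiShift p ‖x‖ ‖x - z‖ := by
  obtain ⟨c, hc, h⟩ := phiShiftDeriv_mul_le_add hp1 hδ
  exact ⟨c, hc, fun n _ x y z => h _ _ _ (norm_nonneg _) (norm_nonneg _) (norm_nonneg _)⟩
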